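/- arXiv:2401.02022 — 2 statements merged into one kernel-verified Lean document; each statement's English description precedes it below -/
import Mathlib

section
/- Define S(l, x) = (1/4) ∑_{l₁=0}^{l} C(l,l₁) (√(c₊^{(l₁)}) + √(c₋^{(l₁)}))² where c₊^{(l₁)} = (1/2^l)(1+x/2)^{l-l₁}(1-x/2)^{l₁} and c₋^{(l₁)} = (1/2^l)(1-x/2)^{l-l₁}(1+x/2)^{l₁}. Then S(l, 0) = 1, the first derivative of S in x vanishes at 0, and the second derivative at 0 equals -l/8; hence 1 - S(l,x) = (l/16)x² + O(x³) as x → 0. -/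
/-!
Expanding each square as `(√a + √b)² = a + b + 2√(ab)`, the product `ab` is the same for every
`l₁`, namely `4⁻ˡ (1 - x²/4)ˡ`, and the binomial theorem sums the diagonal terms, so that
`S(l, x) = (1 + (1 - x²/4)^(l/2)) / 2` for `|x| ≤ 2`. This closed form is analytic at `0` (binomial
series), and its value and first two derivatives there are `1`, `0` and `-l/8`. Hence
`1 - S(l, x) - (l/16) x²` is analytic at `0` with vanishing Taylor coefficients of order `< 3`,
which makes it `O(x³)`.
-/

open Asymptotics

/-- Near-optimal fidelity of the thermodynamic code with magnetizations ±d/2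
under `l` deterministic erasures, as a function of `x = d/N`. -/
noncomputable def thermoS (l : ℕ) (x : ℝ) : ℝ :=
  (1 / 4) * ∑ l₁ ∈ Finset.range (l + 1),
    (l.choose l₁ : ℝ) *
      (Real.sqrt ((1 / 2 ^ l) * (1 + x / 2) ^ (l - l₁) * (1 - x / 2) ^ l₁) +
        Real.sqrt ((1 / 2 ^ l) * (1 - x / 2) ^ (l - l₁) * (1 + x / 2) ^ l₁)) ^ 2

open Filter Topology

theorem AnalyticAt.isBigO_sub_pow_of_iteratedDeriv_eq_zero {𝕜 E : Type*}
    [NontriviallyNormedField 𝕜] [CharZero 𝕜] [NormedAddCommGroup E] [NormedSpace 𝕜 E]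
    [CompleteSpace E] {f : 𝕜 → E} {z₀ : 𝕜} {n : ℕ} (hf : AnalyticAt 𝕜 f z₀)
    (h : ∀ i < n, iteratedDeriv i f z₀ = 0) :
    f =O[𝓝 z₀] fun z => (z - z₀) ^ n := by
  obtain ⟨g, hg, hfg⟩ := (natCast_le_analyticOrderAt hf).mp
    ((natCast_le_analyticOrderAt_iff_iteratedDeriv_eq_zero hf).mpr h)
  refine EventuallyEq.trans_isBigO hfg ?_
  simpa using (isBigO_refl (fun z => (z - z₀) ^ n) (𝓝 z₀)).smul
    (hg.continuousAt.isBigO_one (F := 𝕜))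

theorem Real.sqrt_add_sqrt_sq {a b : ℝ} (ha : 0 ≤ a) (hb : 0 ≤ b) :
    (√a + √b) ^ 2 = a + b + 2 * √(a * b) := by
  rw [add_sq, Real.sq_sqrt ha, Real.sq_sqrt hb, Real.sqrt_mul ha]
  ring

theorem sum_choose_mul_sqrt_add_sqrt_sq {c P Q : ℝ} (hc : 0 ≤ c) (hP : 0 ≤ P) (hQ : 0 ≤ Q)
    (l : ℕ) :
    ∑ k ∈ Finset.range (l + 1), (l.choose k : ℝ) *
        (√(c * P ^ (l - k) * Q ^ k) + √(c * Q ^ (l - k) * P ^ k)) ^ 2 =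
      2 * c * ((P + Q) ^ l + 2 ^ l * √(P * Q) ^ l) := by
  have hsummand : ∀ k ∈ Finset.range (l + 1), (l.choose k : ℝ) *
      (√(c * P ^ (l - k) * Q ^ k) + √(c * Q ^ (l - k) * P ^ k)) ^ 2 =
        c * (Q ^ k * P ^ (l - k) * l.choose k) + c * (P ^ k * Q ^ (l - k) * l.choose k) +
          2 * c * √(P * Q) ^ l * l.choose k := by
    intro k hk
    have hkl : k ≤ l := Nat.lt_succ_iff.mp (Finset.mem_range.mp hk)
    have hprod :
        c * P ^ (l - k) * Q ^ k * (c * Q ^ (l - k) * P ^ k) = (c * √(P * Q) ^ l) ^ 2 := by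
      calc c * P ^ (l - k) * Q ^ k * (c * Q ^ (l - k) * P ^ k)
          = c ^ 2 * (P ^ (l - k) * P ^ k) * (Q ^ (l - k) * Q ^ k) := by ring
        _ = c ^ 2 * (√(P * Q) ^ 2) ^ l := by
          rw [pow_sub_mul_pow P hkl, pow_sub_mul_pow Q hkl, Real.sq_sqrt (mul_nonneg hP hQ),
            mul_pow, mul_assoc]
        _ = (c * √(P * Q) ^ l) ^ 2 := by ring
    rw [Real.sqrt_add_sqrt_sq (by positivity) (by positivity), hprod,
      Real.sqrt_sq (by positivity)]
    ring
  rw [Finset.sum_congr rfl hsummand, Finset.sum_add_distrib, Finset.sum_add_distrib,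
    ← Finset.mul_sum, ← Finset.mul_sum, ← Finset.mul_sum, ← add_pow, ← add_pow,
    ← Nat.cast_sum, Nat.sum_range_choose]
  push_cast
  ring

noncomputable def thermoSClosed (l : ℕ) (x : ℝ) : ℝ :=
  (1 + (1 - x ^ 2 / 4) ^ ((l : ℝ) / 2)) / 2

theorem thermoS_eq_thermoSClosed (l : ℕ) {x : ℝ} (hx : x ∈ Set.Icc (-2) 2) :
    thermoS l x = thermoSClosed l x := by
  obtain ⟨hx₁, hx₂⟩ := hx
  have hu : 0 ≤ 1 - x ^ 2 / 4 := by nlinarith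
  have hPQ : (1 + x / 2) * (1 - x / 2) = 1 - x ^ 2 / 4 := by ring
  have hsqrt : √(1 - x ^ 2 / 4) ^ l = (1 - x ^ 2 / 4) ^ ((l : ℝ) / 2) := by
    rw [Real.sqrt_eq_rpow, ← Real.rpow_natCast, ← Real.rpow_mul hu]
    ring_nf
  rw [thermoS, sum_choose_mul_sqrt_add_sqrt_sq (by positivity) (by linarith) (by linarith),
    hPQ, hsqrt, thermoSClosed]
  field_simp
  ring

theorem thermoS_eventuallyEq_thermoSClosed (l : ℕ) : thermoS l =ᶠ[𝓝 0] thermoSClosed l := by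
  filter_upwards [Icc_mem_nhds (by norm_num : (-2 : ℝ) < 0) (by norm_num : (0 : ℝ) < 2)]
    with x hx using thermoS_eq_thermoSClosed l hx

theorem analyticAt_thermoSClosed (l : ℕ) : AnalyticAt ℝ (thermoSClosed l) 0 := by
  have hbinom : AnalyticAt ℝ (fun y : ℝ => (1 + y) ^ ((l : ℝ) / 2)) 0 :=
    Real.one_add_rpow_hasFPowerSeriesAt_zero.analyticAt
  have hinner : AnalyticAt ℝ (fun x : ℝ => -(x ^ 2 / 4)) 0 := by fun_prop
  have hcomp : AnalyticAt ℝ (fun x : ℝ => (1 + -(x ^ 2 / 4)) ^ ((l : ℝ) / 2)) 0 :=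
    hbinom.comp_of_eq hinner (by simp)
  have hclosed : thermoSClosed l = fun x => (1 + (1 + -(x ^ 2 / 4)) ^ ((l : ℝ) / 2)) / 2 := by
    funext x
    rw [thermoSClosed, ← sub_eq_add_neg]
  rw [hclosed]
  fun_prop

theorem hasDerivAt_one_sub_sq_div_four (x : ℝ) :
    HasDerivAt (fun y : ℝ => 1 - y ^ 2 / 4) (-(x / 2)) x :=
  (((hasDerivAt_pow 2 x).div_const 4).const_sub 1).congr_deriv (by norm_num; ring)

theorem hasDerivAt_thermoSClosed (l : ℕ) {x : ℝ} (hx : 1 - x ^ 2 / 4 ≠ 0) :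
    HasDerivAt (thermoSClosed l) (-(l / 8) * x * (1 - x ^ 2 / 4) ^ ((l : ℝ) / 2 - 1)) x := by
  have hpow := (hasDerivAt_one_sub_sq_div_four x).rpow_const (p := (l : ℝ) / 2) (Or.inl hx)
  exact ((hpow.const_add 1).div_const 2).congr_deriv (by ring)

theorem eventually_hasDerivAt_thermoSClosed (l : ℕ) :
    ∀ᶠ x in 𝓝 0, HasDerivAt (thermoSClosed l)
      (-(l / 8) * x * (1 - x ^ 2 / 4) ^ ((l : ℝ) / 2 - 1)) x := by
  have hne : ∀ᶠ x : ℝ in 𝓝 0, 1 - x ^ 2 / 4 ≠ 0 :=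
    (by fun_prop : Continuous fun x : ℝ => 1 - x ^ 2 / 4).continuousAt.eventually_ne
      (by norm_num)
  filter_upwards [hne] with x hx using hasDerivAt_thermoSClosed l hx

theorem deriv_thermoSClosed_zero (l : ℕ) : deriv (thermoSClosed l) 0 = 0 := by
  simpa using (hasDerivAt_thermoSClosed l (x := 0) (by norm_num)).deriv

theorem hasDerivAt_deriv_thermoSClosed_zero (l : ℕ) :
    HasDerivAt (deriv (thermoSClosed l)) (-(l : ℝ) / 8) 0 := by
  have hderiv : deriv (thermoSClosed l) =ᶠ[𝓝 0]
      fun x => -(l / 8) * x * (1 - x ^ 2 / 4) ^ ((l : ℝ) / 2 - 1) := by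
    filter_upwards [eventually_hasDerivAt_thermoSClosed l] with x hx using hx.deriv
  refine HasDerivAt.congr_of_eventuallyEq ?_ hderiv
  have hlin : HasDerivAt (fun x : ℝ => -((l : ℝ) / 8) * x) (-(l / 8)) 0 := by
    simpa using (hasDerivAt_id (0 : ℝ)).const_mul (-((l : ℝ) / 8))
  have hpow := (hasDerivAt_one_sub_sq_div_four 0).rpow_const (p := (l : ℝ) / 2 - 1)
    (Or.inl (by norm_num))
  exact (hlin.fun_mul hpow).congr_deriv (by norm_num [neg_div])

theorem isBigO_one_sub_thermoSClosed_sub (l : ℕ) :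
    (fun x : ℝ => (1 - thermoSClosed l x) - ((l : ℝ) / 16) * x ^ 2) =O[𝓝 0]
      fun x : ℝ => x ^ 3 := by
  set h : ℝ → ℝ := fun x => (1 - thermoSClosed l x) - ((l : ℝ) / 16) * x ^ 2 with h_def
  have hderiv : ∀ᶠ x in 𝓝 0, HasDerivAt h (-deriv (thermoSClosed l) x - (l / 8) * x) x := by
    filter_upwards [eventually_hasDerivAt_thermoSClosed l] with x hx
    exact ((hx.differentiableAt.hasDerivAt.const_sub 1).fun_sub
      ((hasDerivAt_pow 2 x).const_mul ((l : ℝ) / 16))).congr_deriv (by norm_num; ring)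
  have hderiv₂ : HasDerivAt (deriv h) 0 0 := by
    have := (hasDerivAt_deriv_thermoSClosed_zero l).fun_neg.fun_sub
      ((hasDerivAt_id (0 : ℝ)).const_mul ((l : ℝ) / 8))
    refine (this.congr_deriv (by simp only [mul_one]; ring)).congr_of_eventuallyEq ?_
    filter_upwards [hderiv] with x hx
    simp [hx.deriv]
  have hiter : ∀ i < 3, iteratedDeriv i h 0 = 0 := by
    intro i hi
    interval_cases i
    · simp [h_def, thermoSClosed]
    · simp [hderiv.self_of_nhds.deriv, deriv_thermoSClosed_zero]
    · simp [iteratedDeriv_succ, hderiv₂.deriv]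
  have hanalytic : AnalyticAt ℝ h 0 := by
    have := analyticAt_thermoSClosed l
    fun_prop
  simpa using hanalytic.isBigO_sub_pow_of_iteratedDeriv_eq_zero hiter

theorem thermo_l_erasure_infidelity (l : ℕ) :
    thermoS l 0 = 1 ∧
    deriv (thermoS l) 0 = 0 ∧
    deriv (deriv (thermoS l)) 0 = -(l : ℝ) / 8 ∧
    (fun x : ℝ => (1 - thermoS l x) - ((l : ℝ) / 16) * x ^ 2) =O[nhds 0]
      fun x : ℝ => x ^ 3 := by
  have hS := thermoS_eventuallyEq_thermoSClosed l
  refine ⟨?_, ?_, ?_, ?_⟩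
  · simp [hS.eq_of_nhds, thermoSClosed]
  · rw [hS.deriv_eq, deriv_thermoSClosed_zero]
  · rw [hS.deriv.deriv_eq, (hasDerivAt_deriv_thermoSClosed_zero l).deriv]
  · refine EventuallyEq.trans_isBigO ?_ (isBigO_one_sub_thermoSClosed_sub l)
    filter_upwards [hS] with x hx
    rw [hx]
end

section
/- Let {|ψ_i⟩} be vectors with Gram matrix M (Hermitian PSD) and pseudoinverse square root M^{-1/2}. Then the operator S = ∑_{i,j} (M^{-3/2})_{ij} |ψ_i⟩⟨ψ_j| satisfies S·G·S = P, where G = ∑_i |ψ_i⟩⟨ψ_i| and P is the orthogonal projection onto span{|ψ_i⟩}; i.e., S is the pseudoinverse square root G^{-1/2} of the frame operator G restricted to the span. -/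
open scoped InnerProductSpace ComplexOrder
open Matrix

private lemma eq_zero_of_trace_conjTranspose_mul_self {m : ℕ}
    (D : Matrix (Fin m) (Fin m) ℂ) (h : (Dᴴ * D).trace = 0) : D = 0 := by
  have h' : ∑ j, ∑ k, Complex.normSq (D k j) = 0 := by
    have h2 : ((∑ j, ∑ k, Complex.normSq (D k j) : ℝ) : ℂ) = 0 := by
      push_cast
      rw [← h]
      simp [Matrix.trace, Matrix.diag, Matrix.mul_apply, Matrix.conjTranspose_apply,
        Complex.normSq_eq_conj_mul_self]
    exact_mod_cast h2
  ext k j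
  have hnn : ∀ j ∈ Finset.univ, (0:ℝ) ≤ ∑ k, Complex.normSq (D k j) :=
    fun j _ => Finset.sum_nonneg fun k _ => Complex.normSq_nonneg _
  have h3 := (Finset.sum_eq_zero_iff_of_nonneg hnn).mp h' j (Finset.mem_univ j)
  have h4 := (Finset.sum_eq_zero_iff_of_nonneg
    (fun k _ => Complex.normSq_nonneg (D k j))).mp h3 k (Finset.mem_univ k)
  simpa using Complex.normSq_eq_zero.mp h4

theorem gram_pinv_sqrt_frame {n m : ℕ}
    (ψ : Fin m → EuclideanSpace ℂ (Fin n))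
    (M Minv R T : Matrix (Fin m) (Fin m) ℂ)
    (hGram : ∀ i j, M i j = ⟪ψ i, ψ j⟫_ℂ)
    -- Minv is the Moore–Penrose pseudoinverse of M:
    (hp1 : M * Minv * M = M) (hp2 : Minv * M * Minv = Minv)
    (hp3 : (M * Minv).IsHermitian) (hp4 : (Minv * M).IsHermitian)
    -- R = M^{-1/2}: the PSD square root of the pseudoinverse:
    (hR : R.PosSemidef) (hRR : R * R = Minv)
    -- T = M^{-3/2}:
    (hT : T = Minv * R) :
    let S : EuclideanSpace ℂ (Fin n) → EuclideanSpace ℂ (Fin n) :=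
      fun v => ∑ i, ∑ j, T i j • (⟪ψ j, v⟫_ℂ • ψ i)
    let G : EuclideanSpace ℂ (Fin n) → EuclideanSpace ℂ (Fin n) :=
      fun v => ∑ i, ⟪ψ i, v⟫_ℂ • ψ i
    let P : EuclideanSpace ℂ (Fin n) → EuclideanSpace ℂ (Fin n) :=
      fun v => ∑ i, ∑ j, Minv i j • (⟪ψ j, v⟫_ℂ • ψ i)
    ∀ v, S (G (S v)) = P v := by
  -- Matrix-level facts
  have hRh : Rᴴ = R := hR.isHermitian
  have hMh : Mᴴ = M := by
    ext i j
    simp only [Matrix.conjTranspose_apply, hGram]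
    exact inner_conj_symm _ _
  have hMinvh : Minvᴴ = Minv := by
    rw [← hRR, Matrix.conjTranspose_mul, hRh]
  -- M and Minv commute
  have hcomm : Minv * M = M * Minv := by
    have h := hp3
    unfold Matrix.IsHermitian at h
    rw [Matrix.conjTranspose_mul, hMinvh, hMh] at h
    exact h
  have hQMinv : M * Minv * Minv = Minv := by rw [← hcomm]; exact hp2
  have hMinvQ : Minv * (M * Minv) = Minv := by rw [← Matrix.mul_assoc]; exact hp2
  -- Q * R = R  where Q = M * Minv
  have hQR : M * Minv * R = R := by
    have hx : (R - M * Minv * R) * (R - M * Minv * R)ᴴ = 0 := by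
      have hs : (R - M * Minv * R)ᴴ = R - R * (M * Minv) := by
        rw [Matrix.conjTranspose_sub, Matrix.conjTranspose_mul, hRh, hp3]
      rw [hs]
      have e1 : (R - M * Minv * R) * (R - R * (M * Minv))
          = R * R - (R * R) * (M * Minv) - (M * Minv) * (R * R)
            + (M * Minv) * ((R * R) * (M * Minv)) := by noncomm_ring
      rw [e1, hRR, hMinvQ, hQMinv]
      noncomm_ring
    have hz := Matrix.self_mul_conjTranspose_eq_zero.mp hx
    have := sub_eq_zero.mp hz
    exact this.symm
  have hRQ : R * (M * Minv) = R := by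
    have := congrArg Matrix.conjTranspose hQR
    rwa [Matrix.conjTranspose_mul, hRh, hp3] at this
  -- B = R * M * R equals M * Minv
  have hBh : (R * M * R)ᴴ = R * M * R := by
    rw [Matrix.conjTranspose_mul, Matrix.conjTranspose_mul, hRh, hMh, Matrix.mul_assoc]
  have hBB : (R * M * R) * (R * M * R) = R * M * R := by
    calc (R * M * R) * (R * M * R) = R * (M * (R * R) * M) * R := by noncomm_ring
    _ = R * (M * Minv * M) * R := by rw [hRR]
    _ = R * M * R := by rw [hp1]
  have hQB : (M * Minv) * (R * M * R) = R * M * R := by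
    rw [← Matrix.mul_assoc, ← Matrix.mul_assoc, hQR]
  have hBQ : (R * M * R) * (M * Minv) = R * M * R := by
    rw [Matrix.mul_assoc (R * M) R (M * Minv), hRQ]
  have htr : (M * Minv - R * M * R).trace = 0 := by
    rw [Matrix.trace_sub]
    have e : (R * M * R).trace = (M * Minv).trace := by
      rw [Matrix.trace_mul_comm (R * M) R, ← Matrix.mul_assoc, hRR,
        Matrix.trace_mul_comm Minv M]
    rw [e, sub_self]
  have hD : M * Minv - R * M * R = 0 := by
    apply eq_zero_of_trace_conjTranspose_mul_self
    have hDh : (M * Minv - R * M * R)ᴴ = M * Minv - R * M * R := by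
      rw [Matrix.conjTranspose_sub, hBh, hp3]
    have hDD : (M * Minv - R * M * R) * (M * Minv - R * M * R)
        = M * Minv - R * M * R := by
      have e : (M * Minv - R * M * R) * (M * Minv - R * M * R)
          = (M * Minv) * (M * Minv) - (M * Minv) * (R * M * R)
            - (R * M * R) * (M * Minv) + (R * M * R) * (R * M * R) := by noncomm_ring
      rw [e, hQB, hBQ, hBB]
      have hQQ : (M * Minv) * (M * Minv) = M * Minv := by
        calc (M * Minv) * (M * Minv) = (M * Minv * M) * Minv := by noncomm_ring
        _ = M * Minv := by rw [hp1]
      rw [hQQ]; noncomm_ring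
    rw [hDh, hDD, htr]
  have hBeq : R * M * R = M * Minv := by
    have := sub_eq_zero.mp hD
    exact this.symm
  -- key matrix identity
  have hMMQ : M * (M * Minv) = M := by rw [← hcomm, ← Matrix.mul_assoc]; exact hp1
  have key : T * M * M * T = Minv := by
    rw [hT]
    calc Minv * R * M * M * (Minv * R)
        = Minv * R * (M * (M * Minv) * R) := by noncomm_ring
      _ = Minv * R * (M * R) := by rw [hMMQ]
      _ = Minv * (R * M * R) := by noncomm_ring
      _ = Minv * (M * Minv) := by rw [hBeq]
      _ = Minv := hMinvQ
  -- vector-level computation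
  intro S G P v
  have hsum : ∀ (A : Matrix (Fin m) (Fin m) ℂ) (x : Fin m → ℂ),
      (∑ i, ∑ j, A i j • (x j • ψ i)) = ∑ i, (A *ᵥ x) i • ψ i := by
    intro A x
    refine Finset.sum_congr rfl fun i _ => ?_
    rw [Matrix.mulVec, dotProduct, Finset.sum_smul]
    exact Finset.sum_congr rfl fun j _ => by rw [smul_smul]
  have hinner : ∀ (c : Fin m → ℂ) (k : Fin m),
      ⟪ψ k, ∑ i, c i • ψ i⟫_ℂ = (M *ᵥ c) k := by
    intro c k
    rw [inner_sum, Matrix.mulVec, dotProduct]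
    exact Finset.sum_congr rfl fun i _ => by rw [inner_smul_right, hGram, mul_comm]
  set x : Fin m → ℂ := fun j => ⟪ψ j, v⟫_ℂ with hx
  have hSv : S v = ∑ i, (T *ᵥ x) i • ψ i := hsum T x
  have hGSv : G (S v) = ∑ i, (M *ᵥ (T *ᵥ x)) i • ψ i := by
    show (∑ i, ⟪ψ i, S v⟫_ℂ • ψ i) = _
    refine Finset.sum_congr rfl fun i _ => ?_
    rw [hSv, hinner]
  have hSGSv : S (G (S v)) = ∑ i, ∑ j, T i j • ((M *ᵥ (M *ᵥ (T *ᵥ x))) j • ψ i) := by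
    show (∑ i, ∑ j, T i j • (⟪ψ j, G (S v)⟫_ℂ • ψ i)) = _
    refine Finset.sum_congr rfl fun i _ => Finset.sum_congr rfl fun j _ => ?_
    rw [hGSv, hinner]
  rw [hSGSv, hsum]
  have collapse : T *ᵥ (M *ᵥ (M *ᵥ (T *ᵥ x))) = Minv *ᵥ x := by
    rw [Matrix.mulVec_mulVec, Matrix.mulVec_mulVec, Matrix.mulVec_mulVec, key]
  rw [collapse]
  show _ = ∑ i, ∑ j, Minv i j • (x j • ψ i)
  rw [hsum]
end
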